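/- In the generalized parent J-group J(K) with k_p = ∞, writing z = s_1⋯s_p, the group J(K) decomposes as a direct product ⟨s_1,...,s_{p−1}⟩ × ⟨z⟩, where ⟨s_1,...,s_{p−1}⟩ is the free product of the cyclic groups ⟨s_i⟩ ≅ ℤ/k_iℤ (or ℤ when k_i = ∞) and ⟨z⟩ ≅ ℤ. -/

import Mathlib

/-!
Rotating the word `s_i s_{i+1} ⋯ s_{i-1}` by one letter is conjugation by `s_i`, so the
relations of `J(K)` say exactly that `z` commutes with every generator: `z` is central.
The substitution `s_p = (s_1 ⋯ s_{p-1})⁻¹ z` then gives a homomorphism from `J(K)` to the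
free product of the cyclic groups `⟨s_i⟩`, `i < p`, times `ℤ`: it is well defined because
`z` maps to the central element `(1, 1)`, hence so does every rotation of `z`, and there is
no relation `s_p ^ k_p` since `k_p = ∞`. Its inverse is `(a, n) ↦ a zⁿ`, well defined because `z` is
central.
-/

/-- The cyclically rotated product `a_i a_{i+1} ⋯ a_{i+p-1}` in the free group on `Fin p`
(indices taken mod `p`). -/
def cycProd (p : ℕ) (i : Fin p) : FreeGroup (Fin p) :=
  (List.ofFn (fun j : Fin p => FreeGroup.of (i + j))).prod

/-- Relators of the generalized parent J-group `J(K)`: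
`⟨s_1,…,s_p ∣ s_1⋯s_p = s_2⋯s_p s_1 = ⋯ = s_p s_1⋯s_{p-1}, s_i^{k_i} = 1 if k_i < ∞⟩`.
Here `k i = 0` encodes `k_i = ∞` (the relator `s_i ^ 0` is vacuous), and the equalities of
all cyclic rotations of the product are encoded by the relators
`(s_i ⋯ s_{i+p-1}) (s_j ⋯ s_{j+p-1})⁻¹`. -/
def JRels (p : ℕ) (k : Fin p → ℕ) : Set (FreeGroup (Fin p)) :=
  {r | (∃ i, r = FreeGroup.of i ^ k i) ∨ ∃ i j, r = cycProd p i * (cycProd p j)⁻¹}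

/-- The generalized parent J-group `J(K)`. -/
abbrev JGroup (p : ℕ) (k : Fin p → ℕ) := PresentedGroup (JRels p k)

/-- The central element `z = s_1 s_2 ⋯ s_p` of `J(K)`. -/
def zElt (p : ℕ) (k : Fin p → ℕ) : JGroup p k :=
  (List.ofFn (fun i : Fin p => (PresentedGroup.of i : JGroup p k))).prod

open Multiplicative

section RotatedProduct

variable {G : Type*} [Group G] {n : ℕ}

def rotProd (f : Fin n → G) (i : Fin n) : G :=
  (List.ofFn fun j : Fin n => f (i + j)).prod

lemma map_rotProd {H : Type*} [Group H] (φ : G →* H) (f : Fin n → G) (i : Fin n) :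
    φ (rotProd f i) = rotProd (fun j => φ (f j)) i := by
  rw [rotProd, map_list_prod, List.map_ofFn]
  rfl

lemma cycProd_eq_rotProd (i : Fin n) : cycProd n i = rotProd FreeGroup.of i := rfl

lemma rotProd_zero (f : Fin (n + 1) → G) : rotProd f 0 = (List.ofFn f).prod := by
  simp only [rotProd, zero_add]

lemma rotProd_add_one (f : Fin (n + 1) → G) (i : Fin (n + 1)) :
    rotProd f (i + 1) = (f i)⁻¹ * rotProd f i * f i := by
  have head : rotProd f i = f i * (List.ofFn fun j : Fin n => f (i + j.succ)).prod := by
    rw [rotProd, List.ofFn_succ, List.prod_cons, add_zero]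
  have tail : rotProd f (i + 1) = (List.ofFn fun j : Fin n => f (i + j.succ)).prod * f i := by
    have hlast : i + 1 + Fin.last n = i := by
      rw [add_assoc, add_comm 1, Fin.last_add_one, add_zero]
    have hsucc (j : Fin n) : i + 1 + j.castSucc = i + j.succ := by
      rw [add_assoc, add_comm 1, Fin.coeSucc_eq_succ]
    rw [rotProd, List.ofFn_succ', List.concat_eq_append, List.prod_append, List.prod_singleton,
      hlast]
    simp only [hsucc]
  rw [head, tail]
  group

lemma rotProd_eq_rotProd_zero (f : Fin (n + 1) → G) (h : ∀ j, Commute (f j) (rotProd f 0))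
    (i : Fin (n + 1)) : rotProd f i = rotProd f 0 := by
  induction i using Fin.induction with
  | zero => rfl
  | succ i ih =>
    rw [← Fin.coeSucc_eq_succ, rotProd_add_one, ih, mul_assoc, ← (h _).eq, inv_mul_cancel_left]

end RotatedProduct

section ZModHom

variable {H : Type*} [Group H] {n : ℕ}

def zmodPowHom (x : H) (hx : x ^ n = 1) : Multiplicative (ZMod n) →* H :=
  AddMonoidHom.toMultiplicativeLeft <|
    ZMod.lift n ⟨zmultiplesHom (Additive H) (Additive.ofMul x), by
      rw [zmultiplesHom_apply, ← ofMul_zpow, zpow_natCast, hx]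
      rfl⟩

lemma zmodPowHom_ofAdd_one (x : H) (hx : x ^ n = 1) : zmodPowHom x hx (ofAdd 1) = x := by
  rw [← Int.cast_one (R := ZMod n)]
  simp only [zmodPowHom, AddMonoidHom.coe_toMultiplicativeLeft, Function.comp_apply, toAdd_ofAdd,
    ZMod.lift_coe, zmultiplesHom_apply, one_zsmul, toMul_ofMul]

lemma MonoidHom.ext_mzmod {f g : Multiplicative (ZMod n) →* H}
    (h : f (ofAdd 1) = g (ofAdd 1)) : f = g := by
  refine MonoidHom.ext fun x => ?_
  obtain ⟨m, hm⟩ := ZMod.intCast_surjective (Multiplicative.toAdd x)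
  rw [← ofAdd_toAdd x, ← hm, ← zsmul_one, ofAdd_zsmul, map_zpow, map_zpow, h]

end ZModHom

lemma MonoidHom.ext_prod {M N P : Type*} [Monoid M] [Monoid N] [Monoid P] {f g : M × N →* P}
    (hl : f.comp (MonoidHom.inl M N) = g.comp (MonoidHom.inl M N))
    (hr : f.comp (MonoidHom.inr M N) = g.comp (MonoidHom.inr M N)) : f = g := by
  ext x
  rw [← Prod.fst_mul_snd x, map_mul, map_mul]
  exact congr($hl x.1 * $hr x.2)

section CyclicFreeProduct

variable {p : ℕ} (k : Fin p → ℕ)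

abbrev CyclicFreeProduct := Monoid.CoprodI fun i : Fin p => Multiplicative (ZMod (k i))

def CyclicFreeProduct.gen (i : Fin p) : CyclicFreeProduct k :=
  Monoid.CoprodI.of (i := i) (ofAdd 1)

def splitGen : Fin (p + 1) → CyclicFreeProduct k × Multiplicative ℤ :=
  Fin.lastCases ((List.ofFn (CyclicFreeProduct.gen k)).prod⁻¹, ofAdd 1)
    fun i => (CyclicFreeProduct.gen k i, 1)

lemma rotProd_splitGen_zero : rotProd (splitGen k) 0 = (1, ofAdd 1) := by
  have hinit : (List.ofFn fun j : Fin p => splitGen k j.castSucc)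
      = (List.ofFn (CyclicFreeProduct.gen k)).map (MonoidHom.inl _ (Multiplicative ℤ)) := by
    simp only [List.map_ofFn, splitGen, Fin.lastCases_castSucc]
    rfl
  rw [rotProd_zero, List.ofFn_succ', List.concat_eq_append, List.prod_append,
    List.prod_singleton, hinit, ← map_list_prod, splitGen, Fin.lastCases_last]
  ext <;> simp

lemma rotProd_splitGen (i : Fin (p + 1)) : rotProd (splitGen k) i = (1, ofAdd 1) := by
  have hcentral (j : Fin (p + 1)) : Commute (splitGen k j) (rotProd (splitGen k) 0) := by
    rw [rotProd_splitGen_zero]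
    exact (Commute.one_right _).prod (Commute.all _ _)
  rw [rotProd_eq_rotProd_zero _ hcentral, rotProd_splitGen_zero]

end CyclicFreeProduct

namespace JGroup

section

variable {n : ℕ} (k : Fin n → ℕ)

lemma of_pow_eq_one (i : Fin n) : (PresentedGroup.of i : JGroup n k) ^ k i = 1 := by
  have h : PresentedGroup.mk (JRels n k) (FreeGroup.of i ^ k i) = 1 :=
    (QuotientGroup.eq_one_iff _).mpr (Subgroup.subset_normalClosure (Or.inl ⟨i, rfl⟩))
  rwa [map_pow] at h

lemma rotProd_of_eq (i j : Fin n) :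
    rotProd (PresentedGroup.of (rels := JRels n k)) i = rotProd PresentedGroup.of j := by
  have h : PresentedGroup.mk (JRels n k) (cycProd n i * (cycProd n j)⁻¹) = 1 :=
    (QuotientGroup.eq_one_iff _).mpr (Subgroup.subset_normalClosure (Or.inr ⟨i, j, rfl⟩))
  rw [map_mul, map_inv, mul_inv_eq_one, cycProd_eq_rotProd, cycProd_eq_rotProd, map_rotProd,
    map_rotProd] at h
  exact h

end

variable {p : ℕ} (k : Fin (p + 1) → ℕ)

lemma zElt_eq_rotProd : zElt (p + 1) k = rotProd PresentedGroup.of 0 :=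
  (rotProd_zero _).symm

lemma commute_zElt (g : JGroup (p + 1) k) : Commute g (zElt (p + 1) k) := by
  have hgen (i : Fin (p + 1)) : Commute (PresentedGroup.of i) (zElt (p + 1) k) := by
    have h := rotProd_add_one (PresentedGroup.of (rels := JRels (p + 1) k)) i
    rw [rotProd_of_eq k (i + 1) 0, rotProd_of_eq k i 0, ← zElt_eq_rotProd, mul_assoc,
      eq_inv_mul_iff_mul_eq] at h
    exact h
  have hg : g ∈ Subgroup.centralizer {zElt (p + 1) k} :=
    PresentedGroup.generated_by _ _ (fun i => Subgroup.mem_centralizer_singleton_iff.mpr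
      (hgen i).eq) g
  exact Subgroup.mem_centralizer_singleton_iff.mp hg

lemma zElt_eq_prod_mul_of_last :
    zElt (p + 1) k = (List.ofFn fun j : Fin p =>
      (PresentedGroup.of j.castSucc : JGroup (p + 1) k)).prod * PresentedGroup.of (Fin.last p) := by
  rw [zElt, List.ofFn_succ', List.concat_eq_append, List.prod_append, List.prod_singleton]

def ofSplit :
    CyclicFreeProduct (fun i => k i.castSucc) × Multiplicative ℤ →* JGroup (p + 1) k :=
  (Monoid.CoprodI.lift fun i => zmodPowHom _ (of_pow_eq_one k i.castSucc)).noncommCoprod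
    (zpowersHom _ (zElt (p + 1) k)) fun _ _ => (commute_zElt k _).zpow_right _

lemma ofSplit_apply (a : CyclicFreeProduct (fun i => k i.castSucc)) (n : Multiplicative ℤ) :
    ofSplit k (a, n) = Monoid.CoprodI.lift (fun i => zmodPowHom _ (of_pow_eq_one k i.castSucc)) a
      * zElt (p + 1) k ^ n.toAdd :=
  rfl

lemma lift_gen (i : Fin p) :
    Monoid.CoprodI.lift (fun i => zmodPowHom _ (of_pow_eq_one k i.castSucc))
      (CyclicFreeProduct.gen _ i) = PresentedGroup.of i.castSucc := by
  rw [CyclicFreeProduct.gen, Monoid.CoprodI.lift_of, zmodPowHom_ofAdd_one]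

lemma ofSplit_gen (i : Fin p) :
    ofSplit k (CyclicFreeProduct.gen _ i, 1) = PresentedGroup.of i.castSucc := by
  rw [ofSplit_apply, toAdd_one, zpow_zero, mul_one, lift_gen]

lemma lift_splitGen_rels (hlast : k (Fin.last p) = 0) :
    ∀ r ∈ JRels (p + 1) k, FreeGroup.lift (splitGen fun i => k i.castSucc) r = 1 := by
  rintro r (⟨i, rfl⟩ | ⟨i, j, rfl⟩)
  · rw [map_pow, FreeGroup.lift_apply_of]
    induction i using Fin.lastCases with
    | last => rw [hlast, pow_zero]
    | cast i =>
      rw [splitGen, Fin.lastCases_castSucc, Prod.pow_mk, one_pow, CyclicFreeProduct.gen,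
        ← map_pow, ← ofAdd_nsmul, nsmul_eq_mul, mul_one, ZMod.natCast_self, ofAdd_zero, map_one]
      rfl
  · rw [map_mul, map_inv, cycProd_eq_rotProd, cycProd_eq_rotProd, map_rotProd, map_rotProd]
    simp only [FreeGroup.lift_apply_of, rotProd_splitGen, mul_inv_cancel]

variable (hlast : k (Fin.last p) = 0)

def toSplit :
    JGroup (p + 1) k →* CyclicFreeProduct (fun i => k i.castSucc) × Multiplicative ℤ :=
  PresentedGroup.toGroup (lift_splitGen_rels k hlast)

lemma toSplit_of_castSucc (i : Fin p) :
    toSplit k hlast (PresentedGroup.of i.castSucc) = (CyclicFreeProduct.gen _ i, 1) := by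
  rw [toSplit, PresentedGroup.toGroup.of, splitGen, Fin.lastCases_castSucc]

lemma toSplit_zElt : toSplit k hlast (zElt (p + 1) k) = (1, ofAdd 1) := by
  rw [zElt_eq_rotProd, map_rotProd]
  simp only [toSplit, PresentedGroup.toGroup.of]
  exact rotProd_splitGen _ 0

lemma ofSplit_comp_toSplit : (ofSplit k).comp (toSplit k hlast) = MonoidHom.id _ := by
  refine PresentedGroup.ext fun i => ?_
  induction i using Fin.lastCases with
  | last =>
    rw [MonoidHom.comp_apply, toSplit, PresentedGroup.toGroup.of, splitGen, Fin.lastCases_last,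
      ofSplit_apply, map_inv, map_list_prod, List.map_ofFn]
    simp only [Function.comp_def, lift_gen, toAdd_ofAdd, zpow_one, zElt_eq_prod_mul_of_last,
      inv_mul_cancel_left, MonoidHom.id_apply]
  | cast i => rw [MonoidHom.comp_apply, toSplit_of_castSucc, ofSplit_gen, MonoidHom.id_apply]

lemma toSplit_comp_ofSplit : (toSplit k hlast).comp (ofSplit k) = MonoidHom.id _ := by
  refine MonoidHom.ext_prod (Monoid.CoprodI.ext_hom _ _ fun i => ?_) (MonoidHom.ext_mint ?_)
  · exact MonoidHom.ext_mzmod <|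
      (congrArg (toSplit k hlast) (ofSplit_gen k i)).trans (toSplit_of_castSucc k hlast i)
  · rw [MonoidHom.comp_apply, MonoidHom.inr_apply, MonoidHom.comp_apply, ofSplit_apply, map_one,
      one_mul, toAdd_ofAdd, zpow_one, toSplit_zElt]
    rfl

def splitEquiv :
    JGroup (p + 1) k ≃* CyclicFreeProduct (fun i => k i.castSucc) × Multiplicative ℤ :=
  (toSplit k hlast).toMulEquiv (ofSplit k) (ofSplit_comp_toSplit k hlast)
    (toSplit_comp_ofSplit k hlast)

end JGroup

theorem stmt19_general (p : ℕ) (k : Fin (p + 1) → ℕ)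
    (hlast : k (Fin.last p) = 0) :
    ∃ φ : JGroup (p + 1) k ≃*
        (Monoid.CoprodI fun i : Fin p => Multiplicative (ZMod (k i.castSucc))) ×
          Multiplicative ℤ,
      (∀ i : Fin p,
        φ (PresentedGroup.of i.castSucc) =
          (Monoid.CoprodI.of (M := fun j : Fin p => Multiplicative (ZMod (k j.castSucc))) (i := i) (Multiplicative.ofAdd (1 : ZMod (k i.castSucc))), 1)) ∧
      φ (zElt (p + 1) k) = (1, Multiplicative.ofAdd (1 : ℤ)) :=
  ⟨JGroup.splitEquiv k hlast, JGroup.toSplit_of_castSucc k hlast, JGroup.toSplit_zElt k hlast⟩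

/-- Let `K = (k_1,…,k_p)` with `k_p = ∞` (generators indexed by
`Fin (p+1)`, the last entry being `∞`, encoded by `0`).  Writing `z = s_1⋯s_p`, the group
`J(K)` decomposes as the direct product `⟨s_1,…,s_{p−1}⟩ × ⟨z⟩`, where `⟨s_1,…,s_{p−1}⟩` is
the free product of the cyclic groups `⟨s_i⟩ ≅ ℤ/k_iℤ` (or `ℤ` when `k_i = ∞`) and
`⟨z⟩ ≅ ℤ`. -/
theorem stmt19 (p : ℕ) (k : Fin (p + 1) → ℕ) (hk : ∀ i, k i ≠ 1)
    (hlast : k (Fin.last p) = 0) :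
    ∃ φ : JGroup (p + 1) k ≃*
        (Monoid.CoprodI fun i : Fin p => Multiplicative (ZMod (k i.castSucc))) ×
          Multiplicative ℤ,
      (∀ i : Fin p,
        φ (PresentedGroup.of i.castSucc) =
          (Monoid.CoprodI.of (M := fun j : Fin p => Multiplicative (ZMod (k j.castSucc))) (i := i) (Multiplicative.ofAdd (1 : ZMod (k i.castSucc))), 1)) ∧
      φ (zElt (p + 1) k) = (1, Multiplicative.ofAdd (1 : ℤ)) :=
  stmt19_general p k hlast
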